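/- arXiv:1601.02311 — 2 statements merged into one kernel-verified Lean document; each statement's English description precedes it below -/
import Mathlib

section
/- Let n and t be integers with 1 ≤ t ≤ n/2 and let p be a homogeneous multilinear polynomial of degree t in x_1,…,x_n. Then there exist polynomials p_0, p_1, …, p_t such that: each p_s is a homogeneous multilinear polynomial of degree s satisfying Σ_{i=1}^n ∂p_s/∂x_i = 0 (i.e., p_s ∈ Ker(W_s)); and for every x ∈ {0,1}^n, p(x) = p_t(x) + Σ_{i=1}^{t} p_{t−i}(x)·Π_{j=1}^{i} (|x| − t + j), i.e. p(x) = p_t(x) + (|x|−t+1)·p_{t−1}(x) + (|x|−t+1)(|x|−t+2)·p_{t−2}(x) + ⋯ + (|x|−t+1)⋯(|x|−1)·|x|·p_0(x). -/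
/-!
For `2 t ≤ n` one has `L_t = ker W ⊕ U(L_{t-1})`, where `U` is the up operator
`x^S ↦ Σ_{i ∉ S} x^{S ∪ {i}}`; iterating gives `p = Σ_i U^i p_{t-i}` with `W p_s = 0`.
The splitting comes from the commutation relation `W U - U W = n - 2s` on homogeneous
polynomials of degree `s` (Euler's identity), which makes `W U` act on `U^i (ker W_{t-1-i})`
by a nonzero scalar. On the hypercube `x_i^2 = x_i`, so `U` acts on degree-`s` polynomials
as multiplication by `|x| - s`, and `U^i p_{t-i}` evaluates to `p_{t-i}(x)·Π_{j=1}^{i}(|x|-t+j)`.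
-/

open MvPolynomial

/-- The space `L_s` of homogeneous multilinear degree-`s` polynomials in `n`
variables, i.e. the span of the monomials `x^S = Π_{i∈S} x_i` with `|S| = s`. -/
noncomputable def homogML (n s : ℕ) : Submodule ℝ (MvPolynomial (Fin n) ℝ) :=
  Submodule.span ℝ
    {p | ∃ S : Finset (Fin n), S.card = s ∧ p = ∏ i ∈ S, X i}

noncomputable def Wop (n : ℕ) :
    MvPolynomial (Fin n) ℝ →ₗ[ℝ] MvPolynomial (Fin n) ℝ :=
  ∑ i : Fin n, (pderiv i).toLinearMap

open Finset

namespace MvPolynomial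

variable {R σ : Type*} [CommSemiring R]

theorem pderiv_pderiv_comm (i j : σ) (p : MvPolynomial σ R) :
    pderiv i (pderiv j p) = pderiv j (pderiv i p) := by
  classical
  ext m
  by_cases h : i = j
  · rw [h]
  · simp only [coeff_pderiv, Finsupp.add_apply, Finsupp.single_apply, if_neg h, if_neg (Ne.symm h),
      add_zero, add_right_comm m]
    ring

theorem pderiv_prod_X_of_notMem {i : σ} {S : Finset σ} (hi : i ∉ S) :
    pderiv i (∏ j ∈ S, X j : MvPolynomial σ R) = 0 := by
  classical
  induction S using Finset.induction_on with
  | empty => simp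
  | insert a S ha ih =>
    rw [mem_insert, not_or] at hi
    rw [prod_insert ha, pderiv_mul, pderiv_X_of_ne (Ne.symm hi.1), ih hi.2, zero_mul, mul_zero,
      add_zero]

theorem pderiv_prod_X [DecidableEq σ] (i : σ) (S : Finset σ) :
    pderiv i (∏ j ∈ S, X j : MvPolynomial σ R) =
      if i ∈ S then ∏ j ∈ S.erase i, X j else 0 := by
  split_ifs with hi
  · rw [← mul_prod_erase S _ hi, pderiv_mul, pderiv_X_self, one_mul,
      pderiv_prod_X_of_notMem (notMem_erase i S), mul_zero, add_zero]
  · exact pderiv_prod_X_of_notMem hi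

end MvPolynomial

variable {n : ℕ}

/-- On multilinear polynomials this is the up operator `x^S ↦ Σ_{i ∉ S} x^{S ∪ {i}}`:
the correction term removes `x_i · x^S` for `i ∈ S`. -/
noncomputable def Uop (n : ℕ) : MvPolynomial (Fin n) ℝ →ₗ[ℝ] MvPolynomial (Fin n) ℝ :=
  LinearMap.mulLeft ℝ (∑ j : Fin n, X j) -
    ∑ i : Fin n, (LinearMap.mulLeft ℝ (X i ^ 2)).comp (pderiv i).toLinearMap

theorem Uop_apply (p : MvPolynomial (Fin n) ℝ) :
    Uop n p = (∑ j, X j) * p - ∑ i, X i ^ 2 * pderiv i p := by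
  simp [Uop]

theorem Wop_apply (p : MvPolynomial (Fin n) ℝ) : Wop n p = ∑ i, pderiv i p := by
  simp [Wop]

theorem Wop_prod_X (S : Finset (Fin n)) :
    Wop n (∏ j ∈ S, X j) = ∑ i ∈ S, ∏ j ∈ S.erase i, X j := by
  simp [Wop_apply, pderiv_prod_X, sum_ite_mem]

theorem Uop_prod_X (S : Finset (Fin n)) :
    Uop n (∏ j ∈ S, X j) = ∑ i ∈ Sᶜ, ∏ j ∈ insert i S, X j := by
  have hsq : ∀ i ∈ S, (X i : MvPolynomial (Fin n) ℝ) ^ 2 * ∏ j ∈ S.erase i, X j =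
      X i * ∏ j ∈ S, X j := by
    intro i hi
    rw [sq, mul_assoc, mul_prod_erase S _ hi]
  rw [Uop_apply, sum_mul, ← sum_compl_add_sum S]
  simp only [pderiv_prod_X, mul_ite, mul_zero, sum_ite_mem, univ_inter, sum_congr rfl hsq,
    add_sub_cancel_right]
  exact sum_congr rfl fun i hi => (prod_insert (by simpa using hi)).symm

theorem Wop_Uop (p : MvPolynomial (Fin n) ℝ) :
    Wop n (Uop n p) = Uop n (Wop n p) + (n : ℝ) • p - 2 * ∑ i, X i * pderiv i p := by
  have hpderiv_sum : ∀ j, pderiv j (∑ k, X k : MvPolynomial (Fin n) ℝ) = 1 := by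
    classical
    intro j
    simp [pderiv_X, Pi.single_apply]
  have hsum_pderiv_sq : ∀ i, ∑ j, pderiv j (X i ^ 2 : MvPolynomial (Fin n) ℝ) = 2 * X i := by
    classical
    intro i
    simp [pderiv_X, Pi.single_apply]
  have hcomm : ∑ i, ∑ j, X i ^ 2 * pderiv j (pderiv i p) =
      ∑ j, ∑ i, X i ^ 2 * pderiv i (pderiv j p) := by
    rw [sum_comm]
    simp only [pderiv_pderiv_comm _ _ p]
  simp only [Wop_apply, Uop_apply, map_sub, map_sum, pderiv_mul, hpderiv_sum, sum_add_distrib,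
    ← sum_mul, hsum_pderiv_sq, hcomm, sum_sub_distrib, one_mul, sum_const, card_univ,
    Fintype.card_fin, mul_sum]
  rw [← Nat.cast_smul_eq_nsmul ℝ]
  simp only [mul_assoc]
  abel

theorem prod_X_mem_homogML (S : Finset (Fin n)) : ∏ i ∈ S, X i ∈ homogML n S.card :=
  Submodule.subset_span ⟨S, rfl, rfl⟩

theorem map_homogML_le {M : Type*} [AddCommMonoid M] [Module ℝ M] {s : ℕ}
    (f : MvPolynomial (Fin n) ℝ →ₗ[ℝ] M) (N : Submodule ℝ M)
    (hf : ∀ S : Finset (Fin n), S.card = s → f (∏ i ∈ S, X i) ∈ N) :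
    (homogML n s).map f ≤ N :=
  (Submodule.map_span_le _ _ _).2 fun _ ⟨S, hS, hp⟩ => hp ▸ hf S hS

theorem homogML_le_homogeneousSubmodule (s : ℕ) :
    homogML n s ≤ homogeneousSubmodule (Fin n) ℝ s := by
  refine Submodule.span_le.2 fun _ ⟨S, hS, hp⟩ => ?_
  simpa [hp, hS] using IsHomogeneous.prod S (fun i => X i) (fun _ => 1)
    fun i _ => isHomogeneous_X ℝ i

theorem Wop_mem_homogML {s : ℕ} {p : MvPolynomial (Fin n) ℝ} (hp : p ∈ homogML n (s + 1)) :
    Wop n p ∈ homogML n s := by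
  refine map_homogML_le (Wop n) _ (fun S hS => ?_) (Submodule.mem_map_of_mem hp)
  rw [Wop_prod_X]
  refine Submodule.sum_mem _ fun i hi => ?_
  simpa [card_erase_of_mem hi, hS] using prod_X_mem_homogML (S.erase i)

theorem Wop_eq_zero_of_mem_homogML_zero {p : MvPolynomial (Fin n) ℝ} (hp : p ∈ homogML n 0) :
    Wop n p = 0 := by
  refine (Submodule.mem_bot ℝ).1 <|
    map_homogML_le (Wop n) ⊥ (fun S hS => ?_) (Submodule.mem_map_of_mem hp)
  simp [card_eq_zero.1 hS, Wop_apply]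

theorem Uop_mem_homogML {s : ℕ} {p : MvPolynomial (Fin n) ℝ} (hp : p ∈ homogML n s) :
    Uop n p ∈ homogML n (s + 1) := by
  refine map_homogML_le (Uop n) _ (fun S hS => ?_) (Submodule.mem_map_of_mem hp)
  rw [Uop_prod_X]
  refine Submodule.sum_mem _ fun i hi => ?_
  simpa [card_insert_of_notMem (by simpa using hi : i ∉ S), hS] using
    prod_X_mem_homogML (insert i S)

theorem Uop_pow_mem_homogML {s : ℕ} (k : ℕ) {p : MvPolynomial (Fin n) ℝ}
    (hp : p ∈ homogML n s) : (Uop n ^ k) p ∈ homogML n (s + k) := by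
  induction k with
  | zero => simpa using hp
  | succ k ih => simpa [pow_succ', ← add_assoc] using Uop_mem_homogML ih

theorem Wop_Uop_of_isHomogeneous {s : ℕ} {p : MvPolynomial (Fin n) ℝ} (hp : p.IsHomogeneous s) :
    Wop n (Uop n p) = Uop n (Wop n p) + ((n : ℝ) - 2 * s) • p := by
  rw [Wop_Uop, hp.sum_X_mul_pderiv, ← Nat.cast_smul_eq_nsmul ℝ, mul_smul_comm, two_mul]
  module

theorem Wop_Uop_pow_succ {s : ℕ} (k : ℕ) {h : MvPolynomial (Fin n) ℝ} (hh : h ∈ homogML n s)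
    (hW : Wop n h = 0) :
    Wop n ((Uop n ^ (k + 1)) h) = (((k : ℝ) + 1) * (n - 2 * s - k)) • (Uop n ^ k) h := by
  induction k with
  | zero =>
    simpa [hW] using Wop_Uop_of_isHomogeneous (homogML_le_homogeneousSubmodule s hh)
  | succ k ih =>
    have hUh := homogML_le_homogeneousSubmodule _ (Uop_pow_mem_homogML (k + 1) hh)
    rw [pow_succ', Module.End.mul_apply, Wop_Uop_of_isHomogeneous hUh, ih, map_smul,
      ← Module.End.mul_apply, ← pow_succ', ← add_smul]
    congr 1
    push_cast
    ring

theorem eval_Uop_of_isHomogeneous {x : Fin n → ℝ} (hx : ∀ i, x i = 0 ∨ x i = 1) {s : ℕ}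
    {p : MvPolynomial (Fin n) ℝ} (hp : p.IsHomogeneous s) :
    eval x (Uop n p) = (∑ l, x l - s) * eval x p := by
  have hsq : ∀ i, x i ^ 2 = x i := fun i => by rcases hx i with h | h <;> simp [h]
  have euler := congrArg (eval x) hp.sum_X_mul_pderiv
  simp only [map_sum, map_mul, eval_X, nsmul_eq_mul] at euler
  simp [Uop_apply, hsq, euler]
  ring

theorem eval_Uop_pow {x : Fin n → ℝ} (hx : ∀ i, x i = 0 ∨ x i = 1) (k : ℕ) {s : ℕ}
    {p : MvPolynomial (Fin n) ℝ} (hp : p ∈ homogML n s) :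
    eval x ((Uop n ^ k) p) =
      (∏ j ∈ Icc 1 k, (∑ l, x l - ((s + k : ℕ) : ℝ) + j)) * eval x p := by
  induction k generalizing s p with
  | zero => simp
  | succ k ih =>
    rw [pow_succ, Module.End.mul_apply, ih (Uop_mem_homogML hp),
      eval_Uop_of_isHomogeneous hx (homogML_le_homogeneousSubmodule s hp),
      prod_Icc_succ_top (by omega), add_right_comm s 1 k, ← add_assoc]
    push_cast
    ring

theorem exists_sum_Uop_pow_eq {t : ℕ} (ht : 2 * t ≤ n) {p : MvPolynomial (Fin n) ℝ}
    (hp : p ∈ homogML n t) :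
    ∃ q : ℕ → MvPolynomial (Fin n) ℝ,
      (∀ s ≤ t, q s ∈ homogML n s ∧ Wop n (q s) = 0) ∧
      p = ∑ i ∈ range (t + 1), (Uop n ^ i) (q (t - i)) := by
  induction t generalizing p with
  | zero =>
    refine ⟨fun _ => p, fun s hs => ?_, by simp⟩
    obtain rfl := Nat.le_zero.1 hs
    exact ⟨hp, Wop_eq_zero_of_mem_homogML_zero hp⟩
  | succ t ih =>
    obtain ⟨q, hq, hWp⟩ := ih (by omega) (Wop_mem_homogML hp)
    -- `W U` acts on `U^i q_{t-i}` by `c i`, nonzero because `2 (t + 1) ≤ n`.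
    set c : ℕ → ℝ := fun i => ((i : ℝ) + 1) * (n - 2 * ((t - i : ℕ) : ℝ) - i)
    have hc : ∀ i ≤ t, c i ≠ 0 := by
      intro i hi
      have : ((2 * (t + 1) : ℕ) : ℝ) ≤ n := by exact_mod_cast ht
      simp only [c, Nat.cast_sub hi]
      push_cast at this
      nlinarith
    set r := ∑ i ∈ range (t + 1), (c i)⁻¹ • (Uop n ^ i) (q (t - i))
    have hr : r ∈ homogML n t := by
      refine Submodule.sum_mem _ fun i hi => Submodule.smul_mem _ _ ?_
      simpa [Nat.sub_add_cancel (Nat.lt_succ_iff.1 (mem_range.1 hi))] using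
        Uop_pow_mem_homogML i (hq _ (Nat.sub_le t i)).1
    have hWUr : Wop n (Uop n r) = Wop n p := by
      simp only [r, hWp, map_sum, map_smul]
      refine sum_congr rfl fun i hi => ?_
      obtain ⟨hqi, hWqi⟩ := hq _ (Nat.sub_le t i)
      rw [← Module.End.mul_apply (Uop n), ← pow_succ', Wop_Uop_pow_succ i hqi hWqi, smul_smul,
        inv_mul_cancel₀ (hc i (Nat.lt_succ_iff.1 (mem_range.1 hi))), one_smul]
    set q' : ℕ → MvPolynomial (Fin n) ℝ :=
      fun s => if s = t + 1 then p - Uop n r else (c (t - s))⁻¹ • q s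
    refine ⟨q', fun s hs => ?_, ?_⟩
    · by_cases hst : s = t + 1
      · simp only [q', hst, if_true]
        exact ⟨Submodule.sub_mem _ hp (Uop_mem_homogML hr), by rw [map_sub, hWUr, sub_self]⟩
      · simp only [q', hst, if_false, map_smul]
        have := hq s (by omega)
        exact ⟨Submodule.smul_mem _ _ this.1, by rw [this.2, smul_zero]⟩
    · have hterm : ∀ k ∈ range (t + 1), (Uop n ^ (k + 1)) (q' (t + 1 - (k + 1))) =
          Uop n ((c k)⁻¹ • (Uop n ^ k) (q (t - k))) := by
        intro k hk
        have hkt := Nat.lt_succ_iff.1 (mem_range.1 hk)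
        simp only [q', Nat.add_sub_add_right, if_neg (by omega : t - k ≠ t + 1),
          Nat.sub_sub_self hkt, map_smul, pow_succ', Module.End.mul_apply]
      rw [sum_range_succ', sum_congr rfl hterm, ← map_sum]
      simp [q', r]

theorem homog_decomposition_general (n t : ℕ) (ht2 : 2 * t ≤ n)
    (p : MvPolynomial (Fin n) ℝ) (hp : p ∈ homogML n t) :
    ∃ q : ℕ → MvPolynomial (Fin n) ℝ,
      (∀ s, s ≤ t → q s ∈ homogML n s ∧ Wop n (q s) = 0) ∧
      ∀ x : Fin n → ℝ, (∀ i, x i = 0 ∨ x i = 1) →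
        eval x p = eval x (q t)
          + ∑ i ∈ Finset.Icc 1 t,
              eval x (q (t - i)) *
                ∏ j ∈ Finset.Icc 1 i, ((∑ l, x l) - (t : ℝ) + (j : ℝ)) := by
  obtain ⟨q, hq, rfl⟩ := exists_sum_Uop_pow_eq ht2 hp
  refine ⟨q, hq, fun x hx => ?_⟩
  have hterm : ∀ i ∈ range (t + 1), eval x ((Uop n ^ i) (q (t - i))) =
      eval x (q (t - i)) * ∏ j ∈ Icc 1 i, (∑ l, x l - t + j) := by
    intro i hi
    rw [eval_Uop_pow hx i (hq _ (Nat.sub_le t i)).1,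
      Nat.sub_add_cancel (Nat.lt_succ_iff.1 (mem_range.1 hi)), mul_comm]
  rw [map_sum, sum_congr rfl hterm, range_eq_Ico, sum_eq_sum_Ico_succ_bot (by omega),
    Ico_add_one_right_eq_Icc]
  simp

/-- Every homogeneous multilinear polynomial of degree `t ≤ n/2` decomposes on the
hypercube as `p(x) = p_t(x) + Σ_{i=1}^{t} p_{t-i}(x)·Π_{j=1}^{i}(|x|-t+j)` with
each `p_s` a homogeneous multilinear degree-`s` polynomial in `Ker(W_s)`. -/
theorem homog_decomposition (n t : ℕ) (ht1 : 1 ≤ t) (ht2 : 2 * t ≤ n)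
    (p : MvPolynomial (Fin n) ℝ) (hp : p ∈ homogML n t) :
    ∃ q : ℕ → MvPolynomial (Fin n) ℝ,
      (∀ s, s ≤ t → q s ∈ homogML n s ∧ Wop n (q s) = 0) ∧
      ∀ x : Fin n → ℝ, (∀ i, x i = 0 ∨ x i = 1) →
        eval x p = eval x (q t)
          + ∑ i ∈ Finset.Icc 1 t,
              eval x (q (t - i)) *
                ∏ j ∈ Finset.Icc 1 i, ((∑ l, x l) - (t : ℝ) + (j : ℝ)) :=
  homog_decomposition_general n t ht2 p hp
end

section
/- Let n, t, t′ be integers with n/2 ≥ t > t′ ≥ 0. Let p be a homogeneous multilinear polynomial of degree t and q a homogeneous multilinear polynomial of degree t′ in x_1,…,x_n, with Σ_{i=1}^n ∂p/∂x_i = 0 and Σ_{i=1}^n ∂q/∂x_i = 0. Then the symmetrization of their product vanishes identically on the hypercube: for every x ∈ {0,1}^n, Σ_{σ ∈ S_n} p(σx)·q(σx) = 0, where (σx)_i = x_{σ(i)}. -/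
open MvPolynomial

/-!
Write `p = ∑ a_S x^S` and `q = ∑ b_T x^T`. On the hypercube `x^S x^T = x^(S ∪ T)`, and the
symmetrisation `∑_σ x^W(σx)` depends only on `|W|`; since `|S ∪ T| = t + t' - |S ∩ T|` it is a
function of `S ∩ T`, which Möbius inversion writes as `∑_{U ⊆ S ∩ T} c_U`. The symmetrised
product is then `∑_U c_U (∑_{S ⊇ U} a_S) (∑_{T ⊇ U} b_T)`. For `|U| ≥ t > t'` the last sum is
empty. For `|U| < t` the middle sum vanishes because `Wp = 0`: the coefficient of `x^R` in `Wp`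
is `∑_{i ∉ R} a_{R ∪ {i}}`, and summing these over the `R ⊇ U` of size `t - 1` counts every
`S ⊇ U` exactly `t - |U|` times.
-/

open Finset

theorem exists_eq_sum_Iic {𝕜 α : Type*} [Field 𝕜] [PartialOrder α] [OrderBot α]
    [LocallyFiniteOrder α] [Fintype α] [DecidableEq α] (g : α → 𝕜) :
    ∃ f : α → 𝕜, ∀ x, g x = ∑ y ∈ Iic x, f y := by
  -- The zeta transform is injective by Möbius inversion, hence surjective.
  let Z : (α → 𝕜) →ₗ[𝕜] (α → 𝕜) := LinearMap.pi fun x ↦ ∑ y ∈ Iic x, LinearMap.proj y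
  have hZ : ∀ f x, Z f x = ∑ y ∈ Iic x, f y := fun f x ↦ by simp [Z]
  have hinj : Function.Injective Z := by
    refine (injective_iff_map_eq_zero Z).2 fun f hf ↦ funext fun x ↦ ?_
    simpa [hf] using IncidenceAlgebra.moebius_inversion_bot f (Z f) (hZ f) x
  obtain ⟨f, hf⟩ := LinearMap.injective_iff_surjective.1 hinj g
  exact ⟨f, fun x ↦ by rw [← hf, hZ]⟩

section Finsets

variable {α : Type*} [DecidableEq α]

theorem prod_mul_prod_eq_prod_union_of_isIdempotentElem {M : Type*} [CommMonoid M] {f : α → M}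
    (hf : ∀ i, IsIdempotentElem (f i)) (s t : Finset α) :
    (∏ i ∈ s, f i) * ∏ i ∈ t, f i = ∏ i ∈ s ∪ t, f i := by
  have hinter : IsIdempotentElem (∏ i ∈ s ∩ t, f i) := by
    simp only [IsIdempotentElem, ← prod_mul_distrib, fun i ↦ (hf i).eq]
  rw [← prod_union_inter, ← prod_sdiff (inter_subset_union : s ∩ t ⊆ s ∪ t), mul_assoc, hinter.eq]

variable [Fintype α]

open scoped Pointwise in
theorem sum_perm_prod_eq_of_card_eq {R : Type*} [CommSemiring R] (f : α → R)
    {U V : Finset α} (h : #U = #V) :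
    ∑ σ : Equiv.Perm α, ∏ i ∈ U, f (σ i) = ∑ σ : Equiv.Perm α, ∏ i ∈ V, f (σ i) := by
  obtain ⟨τ, hτ⟩ := (Set.powersetCard.isPretransitive (α := α) (n := #V)).exists_smul_eq
    ⟨U, h⟩ ⟨V, rfl⟩
  have hV : V = U.map τ.toEmbedding := by
    have hτV : τ • U = V := congrArg Subtype.val hτ
    rw [← hτV, smul_finset_def, map_eq_image]
    rfl
  rw [hV, ← Equiv.sum_comp (Equiv.mulRight τ)]
  simp [prod_map]

theorem sum_powersetCard_sum_compl_insert {M : Type*} [AddCommMonoid M] (f : Finset α → M)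
    (U : Finset α) (k : ℕ) :
    ∑ R ∈ powersetCard k univ with U ⊆ R, ∑ i ∈ Rᶜ, f (insert i R)
      = ∑ S ∈ powersetCard (k + 1) univ with U ⊆ S, #(S \ U) • f S := by
  simp_rw [← sum_const]
  rw [sum_sigma', sum_sigma']
  refine sum_nbij' (fun x ↦ ⟨insert x.2 x.1, x.2⟩) (fun x ↦ ⟨x.1.erase x.2, x.2⟩)
    ?_ ?_ ?_ ?_ fun _ _ ↦ rfl
  · rintro ⟨R, i⟩ hx
    simp only [mem_sigma, mem_filter, mem_powersetCard, mem_compl, mem_sdiff] at hx ⊢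
    grind [card_insert_of_notMem]
  · rintro ⟨S, i⟩ hx
    simp only [mem_sigma, mem_filter, mem_powersetCard, mem_compl, mem_sdiff] at hx ⊢
    grind [card_erase_of_mem]
  · rintro ⟨R, i⟩ hx
    simp only [mem_sigma, mem_compl] at hx
    simp [erase_insert hx.2]
  · rintro ⟨S, i⟩ hx
    simp only [mem_sigma, mem_sdiff] at hx
    simp [insert_erase hx.2.1]

theorem exists_eq_sum_powerset_inter {K : Type*} [Field K] {f : Finset α → K}
    (hf : f.FactorsThrough card) (s t : ℕ) :
    ∃ c : Finset α → K, ∀ S T, #S = s → #T = t →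
      f (S ∪ T) = ∑ U ∈ (S ∩ T).powerset, c U := by
  obtain ⟨c, hc⟩ := exists_eq_sum_Iic fun V : Finset α ↦
    Function.extend card f 0 (s + t - #V)
  refine ⟨c, fun S T hS hT ↦ ?_⟩
  have hcard : #(S ∪ T) = s + t - #(S ∩ T) := by
    have := card_union_add_card_inter S T
    omega
  rw [← Iic_eq_powerset, ← hc, ← hcard]
  exact (hf.extend_apply 0 _).symm

theorem sum_sum_mul_sum_powerset_inter {R : Type*} [CommSemiring R]
    (A B : Finset (Finset α)) (a b c : Finset α → R) :
    ∑ S ∈ A, ∑ T ∈ B, a S * b T * ∑ U ∈ (S ∩ T).powerset, c U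
      = ∑ U, c U * (∑ S ∈ A with U ⊆ S, a S) * ∑ T ∈ B with U ⊆ T, b T := by
  simp_rw [← filter_subset_univ, sum_filter, subset_inter_iff, mul_sum, sum_mul]
  conv_rhs => rw [sum_comm]; enter [2, T]; rw [sum_comm]
  rw [sum_comm]
  refine sum_congr rfl fun T _ ↦ sum_congr rfl fun S _ ↦ sum_congr rfl fun U _ ↦ ?_
  by_cases hS : U ⊆ S <;> by_cases hT : U ⊆ T <;> simp [hS, hT, mul_comm, mul_left_comm]

end Finsets

section FinsetExp

variable {σ R : Type*} [CommSemiring R]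

noncomputable def finsetExp (S : Finset σ) : σ →₀ ℕ := ∑ i ∈ S, Finsupp.single i 1

theorem prod_X_eq_monomial_finsetExp (S : Finset σ) :
    ∏ i ∈ S, X i = (monomial (finsetExp S) 1 : MvPolynomial σ R) :=
  (monomial_sum_one S _).symm

variable [DecidableEq σ]

theorem finsetExp_apply (S : Finset σ) (j : σ) : finsetExp S j = if j ∈ S then 1 else 0 := by
  simp [finsetExp, Finsupp.finsetSum_apply, Finsupp.single_apply]

theorem finsetExp_injective : Function.Injective (finsetExp : Finset σ → σ →₀ ℕ) := by
  intro S T h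
  ext j
  have := DFunLike.congr_fun h j
  simp only [finsetExp_apply] at this
  split_ifs at this <;> simp_all

theorem finsetExp_insert {i : σ} {S : Finset σ} (hi : i ∉ S) :
    finsetExp (insert i S) = finsetExp S + Finsupp.single i 1 := by
  rw [finsetExp, sum_insert hi, add_comm, finsetExp]

end FinsetExp

section HomogML

variable {n s : ℕ} {p : MvPolynomial (Fin n) ℝ}

theorem sum_coeff_smul_prod_X_of_mem_homogML (hp : p ∈ homogML n s) :
    ∑ S ∈ powersetCard s univ, coeff (finsetExp S) p • ∏ i ∈ S, X i = p := by
  induction hp using Submodule.span_induction with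
  | mem q hq =>
    obtain ⟨T, hT, rfl⟩ := hq
    simp_rw [prod_X_eq_monomial_finsetExp T, coeff_monomial, finsetExp_injective.eq_iff, ite_smul,
      one_smul, zero_smul]
    simp [hT, prod_X_eq_monomial_finsetExp]
  | zero => simp
  | add q r _ _ hq hr => simp_rw [coeff_add, add_smul, sum_add_distrib, hq, hr]
  | smul c q _ hq => simp_rw [coeff_smul, smul_eq_mul, mul_smul, ← smul_sum, hq]

theorem coeff_eq_zero_of_mem_homogML (hp : p ∈ homogML n s) {m : Fin n →₀ ℕ} {i : Fin n}
    (hm : 1 < m i) : coeff m p = 0 := by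
  rw [← sum_coeff_smul_prod_X_of_mem_homogML hp, coeff_sum]
  refine sum_eq_zero fun S _ ↦ ?_
  rw [prod_X_eq_monomial_finsetExp, coeff_smul, coeff_monomial, if_neg, smul_zero]
  rintro rfl
  rw [finsetExp_apply] at hm
  split_ifs at hm <;> omega

theorem eval_eq_sum_of_mem_homogML (hp : p ∈ homogML n s) (y : Fin n → ℝ) :
    eval y p = ∑ S ∈ powersetCard s univ, coeff (finsetExp S) p * ∏ i ∈ S, y i := by
  conv_lhs => rw [← sum_coeff_smul_prod_X_of_mem_homogML hp]
  simp [map_sum, map_prod]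

theorem coeff_finsetExp_Wop_of_mem_homogML (hp : p ∈ homogML n s) (R : Finset (Fin n)) :
    coeff (finsetExp R) (Wop n p) = ∑ i ∈ Rᶜ, coeff (finsetExp (insert i R)) p := by
  have hcompl : ∀ i ∈ Rᶜ, coeff (finsetExp R) (pderiv i p) = coeff (finsetExp (insert i R)) p := by
    intro i hi
    rw [mem_compl] at hi
    simp [coeff_pderiv, finsetExp_insert hi, finsetExp_apply, hi]
  have hmem : ∀ i ∈ R, coeff (finsetExp R) (pderiv i p) = 0 := by
    intro i hi
    rw [coeff_pderiv, coeff_eq_zero_of_mem_homogML hp (i := i), zero_mul]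
    simp [finsetExp_apply, hi]
  rw [Wop, LinearMap.sum_apply, coeff_sum]
  simp only [Derivation.coeFn_coe]
  rw [← sum_compl_add_sum R, sum_eq_zero hmem, add_zero]
  exact sum_congr rfl hcompl

theorem sum_coeff_finsetExp_superset_eq_zero (hp : p ∈ homogML n s) (hpk : Wop n p = 0)
    {U : Finset (Fin n)} (hU : #U < s) :
    ∑ S ∈ powersetCard s univ with U ⊆ S, coeff (finsetExp S) p = 0 := by
  obtain ⟨k, rfl⟩ : ∃ k, s = k + 1 := ⟨s - 1, by omega⟩
  have hcount := sum_powersetCard_sum_compl_insert (fun S ↦ coeff (finsetExp S) p) U k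
  simp_rw [← coeff_finsetExp_Wop_of_mem_homogML hp, hpk, coeff_zero, sum_const_zero] at hcount
  have hcard : ∀ S ∈ {S ∈ powersetCard (k + 1) (univ : Finset (Fin n)) | U ⊆ S},
      #(S \ U) = k + 1 - #U := by
    intro S hS
    rw [mem_filter, mem_powersetCard_univ] at hS
    rw [card_sdiff_of_subset hS.2, hS.1]
  rw [sum_congr rfl fun S hS ↦ by rw [hcard S hS], ← smul_sum] at hcount
  exact (smul_eq_zero.1 hcount.symm).resolve_left (by omega)

theorem sum_perm_eval_mul_eval_of_mem_homogML {s' : ℕ} {q : MvPolynomial (Fin n) ℝ}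
    (hp : p ∈ homogML n s) (hq : q ∈ homogML n s') {x : Fin n → ℝ}
    (hx : ∀ i, x i = 0 ∨ x i = 1) :
    ∑ σ : Equiv.Perm (Fin n), eval (x ∘ σ) p * eval (x ∘ σ) q
      = ∑ S ∈ powersetCard s univ, ∑ T ∈ powersetCard s' univ,
          coeff (finsetExp S) p * coeff (finsetExp T) q *
            ∑ σ : Equiv.Perm (Fin n), ∏ i ∈ S ∪ T, x (σ i) := by
  have hidem : ∀ i, IsIdempotentElem (x i) := fun i ↦ by
    rcases hx i with h | h <;> simp [IsIdempotentElem, h]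
  simp_rw [eval_eq_sum_of_mem_homogML hp, eval_eq_sum_of_mem_homogML hq, sum_mul_sum, mul_sum]
  rw [sum_comm]
  refine sum_congr rfl fun S _ ↦ ?_
  rw [sum_comm]
  refine sum_congr rfl fun T _ ↦ sum_congr rfl fun σ _ ↦ ?_
  rw [mul_mul_mul_comm, Function.comp_def,
    prod_mul_prod_eq_prod_union_of_isIdempotentElem (fun i ↦ hidem (σ i))]

end HomogML

theorem sym_product_different_kernels_general (n t t' : ℕ) (htt' : t' < t)
    (p q : MvPolynomial (Fin n) ℝ)
    (hp : p ∈ homogML n t) (hq : q ∈ homogML n t')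
    (hpk : Wop n p = 0) :
    ∀ x : Fin n → ℝ, (∀ i, x i = 0 ∨ x i = 1) →
      ∑ σ : Equiv.Perm (Fin n), eval (x ∘ σ) p * eval (x ∘ σ) q = 0 := by
  intro x hx
  obtain ⟨c, hc⟩ := exists_eq_sum_powerset_inter
    (f := fun W ↦ ∑ σ : Equiv.Perm (Fin n), ∏ i ∈ W, x (σ i))
    (fun _ _ h ↦ sum_perm_prod_eq_of_card_eq x h) t t'
  simp_rw +contextual [← mem_powersetCard_univ] at hc
  rw [sum_perm_eval_mul_eval_of_mem_homogML hp hq hx,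
    sum_congr rfl fun S hS ↦ sum_congr rfl fun T hT ↦ by rw [hc S T hS hT],
    sum_sum_mul_sum_powerset_inter]
  refine sum_eq_zero fun U _ ↦ ?_
  rcases lt_or_ge #U t with hU | hU
  · rw [sum_coeff_finsetExp_superset_eq_zero hp hpk hU, mul_zero, zero_mul]
  · have hnone : ∀ T ∈ powersetCard t' univ, ¬U ⊆ T := fun T hT hUT ↦ by
      have := card_le_card hUT
      rw [mem_powersetCard_univ] at hT
      omega
    rw [filter_false_of_mem hnone, sum_empty, mul_zero]

/-- For `p ∈ Ker(W_t)` and `q ∈ Ker(W_t')` with `n/2 ≥ t > t'`, the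
symmetrization of `pq` vanishes identically on the hypercube. -/
theorem sym_product_different_kernels (n t t' : ℕ) (ht : 2 * t ≤ n) (htt' : t' < t)
    (p q : MvPolynomial (Fin n) ℝ)
    (hp : p ∈ homogML n t) (hq : q ∈ homogML n t')
    (hpk : Wop n p = 0) (hqk : Wop n q = 0) :
    ∀ x : Fin n → ℝ, (∀ i, x i = 0 ∨ x i = 1) →
      ∑ σ : Equiv.Perm (Fin n), eval (x ∘ σ) p * eval (x ∘ σ) q = 0 :=
  sym_product_different_kernels_general n t t' htt' p q hp hq hpk
end
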